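/- Let X be a finite topological space, x, y ∈ X with Ψ(x,y) = k, and let (U_j)_{j≥0} be any nested sequence of open sets around x with y ∈ U_k. Then U_k = U_x ∪ U_y. -/

import Mathlib

open Set Topology

/-- The minimal open set containing `x`: the intersection of all open sets containing `x`. -/
def minOpen (X : Type*) [TopologicalSpace X] (x : X) : Set X :=
  ⋂₀ {U : Set X | IsOpen U ∧ x ∈ U}

/-- A nested sequence of open sets around `x`: a sequence of open sets starting at the
minimal open set of `x`, increasing, strictly increasing until it reaches the whole space
(after which it is stationary), with no open set strictly between consecutive terms. -/
def NestedSeq (X : Type*) [TopologicalSpace X] (x : X) (c : ℕ → Set X) : Prop :=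
  c 0 = minOpen X x ∧ (∀ j, IsOpen (c j)) ∧
  (∀ j, c j ⊆ c (j + 1)) ∧
  (∀ j, c j ≠ c (j + 1) ∨ c j = Set.univ) ∧
  (∀ j, ∀ V : Set X, IsOpen V → c j ⊆ V → V ⊆ c (j + 1) → V = c j ∨ V = c (j + 1))

/-- The furtherness `Ψ(x,y)`: the least `k` such that `y` belongs to the `k`-th term of
some nested sequence of open sets around `x`. -/
noncomputable def furth (X : Type*) [TopologicalSpace X] (x y : X) : ℕ :=
  sInf {k | ∃ c : ℕ → Set X, NestedSeq X x c ∧ y ∈ c k}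

section Aux
variable {X : Type*} [TopologicalSpace X] [Finite X]

set_option linter.unusedSectionVars false
set_option linter.unusedVariables false

lemma isOpen_minOpen (x : X) : IsOpen (minOpen X x) :=
  Set.Finite.isOpen_sInter (Set.toFinite _) (fun t ht => ht.1)

lemma mem_minOpen (x : X) : x ∈ minOpen X x :=
  Set.mem_sInter.2 fun t ht => ht.2

lemma minOpen_subset {x : X} {U : Set X} (hU : IsOpen U) (hx : x ∈ U) :
    minOpen X x ⊆ U := Set.sInter_subset_of_mem ⟨hU, hx⟩

/-- Rank of an open set: number of distinct minimal open sets of its points. -/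
noncomputable def rk (U : Set X) : ℕ := (minOpen X '' U).ncard

lemma rk_mono {U V : Set X} (h : U ⊆ V) : rk U ≤ rk V :=
  Set.ncard_le_ncard (Set.image_mono h) (Set.toFinite _)

lemma rk_strict {U V : Set X} (hU : IsOpen U) (hUV : U ⊆ V) (hne : U ≠ V) :
    rk U < rk V := by
  obtain ⟨z, hzV, hzU⟩ : ∃ z, z ∈ V ∧ z ∉ U := by
    by_contra hcon
    push_neg at hcon
    exact hne (Set.Subset.antisymm hUV fun v hv => hcon v hv)
  have hnm : minOpen X z ∉ minOpen X '' U := by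
    rintro ⟨w, hw, hmw⟩
    exact hzU (minOpen_subset hU hw (hmw ▸ mem_minOpen z))
  have hss : minOpen X '' U ⊂ minOpen X '' V := by
    refine ⟨Set.image_mono hUV, fun hsub => hnm (hsub ⟨z, hzV, rfl⟩)⟩
  exact Set.ncard_lt_ncard hss (Set.toFinite _)

/-- If `V` covers `U` in the lattice of open sets, the rank goes up by exactly one. -/
lemma rk_cover {U V : Set X} (hU : IsOpen U) (hUV : U ⊆ V) (hne : U ≠ V)
    (hcov : ∀ Z : Set X, IsOpen Z → U ⊆ Z → Z ⊆ V → Z = U ∨ Z = V) (hVo : IsOpen V) :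
    rk V = rk U + 1 := by
  obtain ⟨z, hzV, hzU⟩ : ∃ z, z ∈ V ∧ z ∉ U := by
    by_contra hcon
    push_neg at hcon
    exact hne (Set.Subset.antisymm hUV fun v hv => hcon v hv)
  -- V = U ∪ minOpen of any element of V \ U
  have key : ∀ w, w ∈ V → w ∉ U → U ∪ minOpen X w = V := by
    intro w hwV hwU
    rcases hcov (U ∪ minOpen X w) (hU.union (isOpen_minOpen w))
      Set.subset_union_left
      (Set.union_subset hUV (minOpen_subset hVo hwV)) with h | h
    · exact absurd (h ▸ (Set.mem_union_right _ (mem_minOpen w))) hwU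
    · exact h
  have himg : minOpen X '' V = insert (minOpen X z) (minOpen X '' U) := by
    apply Set.Subset.antisymm
    · rintro S ⟨w, hwV, rfl⟩
      by_cases hwU : w ∈ U
      · exact Set.mem_insert_of_mem _ ⟨w, hwU, rfl⟩
      · -- minOpen w = minOpen z
        have h1 : w ∈ minOpen X z := by
          have := (key z hzV hzU).symm ▸ hwV
          rcases this with h | h
          · exact absurd h hwU
          · exact h
        have h2 : z ∈ minOpen X w := by
          have hz' := (key w hwV hwU).symm ▸ hzV
          rcases hz' with h | h
          · exact absurd h hzU
          · exact h
        have : minOpen X w = minOpen X z :=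
          Set.Subset.antisymm (minOpen_subset (isOpen_minOpen z) h1)
            (minOpen_subset (isOpen_minOpen w) h2)
        exact this ▸ Set.mem_insert _ _
    · rintro S hS
      rcases hS with rfl | ⟨w, hw, rfl⟩
      · exact ⟨z, hzV, rfl⟩
      · exact ⟨w, hUV hw, rfl⟩
  have hnm : minOpen X z ∉ minOpen X '' U := by
    rintro ⟨w, hw, hmw⟩
    exact hzU (minOpen_subset hU hw (hmw ▸ mem_minOpen z))
  rw [rk, rk, himg, Set.ncard_insert_of_notMem hnm (Set.toFinite _)]

/-- Existence of a cover of `U` inside `T`. -/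
lemma cover_exists {U T : Set X} (hU : IsOpen U) (hT : IsOpen T) (hUT : U ⊂ T) :
    ∃ V : Set X, IsOpen V ∧ U ⊂ V ∧ V ⊆ T ∧
      ∀ Z : Set X, IsOpen Z → U ⊆ Z → Z ⊆ V → Z = U ∨ Z = V := by
  have hne : {V : Set X | IsOpen V ∧ U ⊂ V ∧ V ⊆ T}.Nonempty :=
    ⟨T, hT, hUT, Set.Subset.rfl⟩
  obtain ⟨V, hV, hmin⟩ : ∃ V ∈ {V : Set X | IsOpen V ∧ U ⊂ V ∧ V ⊆ T}, ∀ a' ∈ {V : Set X | IsOpen V ∧ U ⊂ V ∧ V ⊆ T}, id a' ≤ id V → id V = id a' := by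
    obtain ⟨V, hV, hm⟩ := (Set.toFinite _).exists_minimal hne
    exact ⟨V, hV, fun a ha hle => le_antisymm (hm ha hle) hle⟩
  refine ⟨V, hV.1, hV.2.1, hV.2.2, fun Z hZo hUZ hZV => ?_⟩
  by_cases hZU : Z = U
  · exact Or.inl hZU
  · right
    have hZmem : Z ∈ {V : Set X | IsOpen V ∧ U ⊂ V ∧ V ⊆ T} :=
      ⟨hZo, ⟨hUZ, fun hrev => hZU (Set.Subset.antisymm hrev hUZ)⟩, hZV.trans hV.2.2⟩
    exact (hmin Z hZmem hZV).symm

variable (x : X)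

attribute [local instance] Classical.propDecidable

/-- One step of the chain towards/beyond `W`. -/
noncomputable def chainStep (W U : Set X) : Set X :=
  if h : IsOpen U ∧ IsOpen W ∧ U ⊂ W then (cover_exists h.1 h.2.1 h.2.2).choose
  else if h2 : IsOpen U ∧ U ≠ Set.univ then
    (cover_exists h2.1 isOpen_univ (Set.ssubset_univ_iff.2 h2.2)).choose
  else Set.univ

lemma chainStep_spec1 {W U : Set X} (h : IsOpen U ∧ IsOpen W ∧ U ⊂ W) :
    IsOpen (chainStep W U) ∧ U ⊂ chainStep W U ∧ chainStep W U ⊆ W ∧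
      ∀ Z : Set X, IsOpen Z → U ⊆ Z → Z ⊆ chainStep W U → Z = U ∨ Z = chainStep W U := by
  rw [chainStep, dif_pos h]
  exact (cover_exists h.1 h.2.1 h.2.2).choose_spec

lemma chainStep_spec2 {W U : Set X} (h : ¬(IsOpen U ∧ IsOpen W ∧ U ⊂ W))
    (h2 : IsOpen U ∧ U ≠ Set.univ) :
    IsOpen (chainStep W U) ∧ U ⊂ chainStep W U ∧
      ∀ Z : Set X, IsOpen Z → U ⊆ Z → Z ⊆ chainStep W U → Z = U ∨ Z = chainStep W U := by
  rw [chainStep, dif_neg h, dif_pos h2]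
  obtain ⟨a, b, -, d⟩ := (cover_exists h2.1 isOpen_univ (Set.ssubset_univ_iff.2 h2.2)).choose_spec
  exact ⟨a, b, d⟩

lemma chainStep_univ {W : Set X} : chainStep W (Set.univ : Set X) = Set.univ := by
  rw [chainStep, dif_neg, dif_neg]
  · rintro ⟨-, h2⟩; exact h2 rfl
  · rintro ⟨-, -, h3⟩; exact h3.2 (Set.subset_univ W)

lemma chainStep_prop {W U : Set X} (hW : IsOpen W) (hU : IsOpen U) :
    IsOpen (chainStep W U) ∧ U ⊆ chainStep W U ∧
      (U ≠ chainStep W U ∨ U = Set.univ) ∧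
      ∀ Z : Set X, IsOpen Z → U ⊆ Z → Z ⊆ chainStep W U → Z = U ∨ Z = chainStep W U := by
  by_cases h1 : U ⊂ W
  · obtain ⟨a, b, -, d⟩ := chainStep_spec1 ⟨hU, hW, h1⟩
    exact ⟨a, b.1, Or.inl (fun he => b.2 he.ge), d⟩
  · by_cases h2 : U = Set.univ
    · subst h2
      rw [chainStep_univ]
      exact ⟨isOpen_univ, Set.Subset.rfl, Or.inr rfl,
        fun Z hZ hUZ hZU => Or.inl (Set.Subset.antisymm hZU hUZ)⟩
    · obtain ⟨a, b, d⟩ := chainStep_spec2 (fun hcon => h1 hcon.2.2) ⟨hU, h2⟩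
      exact ⟨a, b.1, Or.inl (fun he => b.2 he.ge), d⟩

/-- The canonical maximal chain through `W`, starting at `minOpen X x`. -/
noncomputable def chainSeq (x : X) (W : Set X) : ℕ → Set X :=
  fun n => (chainStep W)^[n] (minOpen X x)

lemma chainSeq_isOpen (x : X) {W : Set X} (hW : IsOpen W) (n : ℕ) :
    IsOpen (chainSeq x W n) := by
  induction n with
  | zero => exact isOpen_minOpen x
  | succ n ih =>
    rw [chainSeq, Function.iterate_succ_apply']
    exact (chainStep_prop hW ih).1

lemma chainSeq_nested (x : X) {W : Set X} (hW : IsOpen W) :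
    NestedSeq X x (chainSeq x W) := by
  have heq : ∀ j, chainSeq x W (j + 1) = chainStep W (chainSeq x W j) := fun j =>
    Function.iterate_succ_apply' _ _ _
  refine ⟨rfl, chainSeq_isOpen x hW, ?_, ?_, ?_⟩
  · intro j
    rw [heq]
    exact (chainStep_prop hW (chainSeq_isOpen x hW j)).2.1
  · intro j
    rw [heq]
    exact (chainStep_prop hW (chainSeq_isOpen x hW j)).2.2.1
  · intro j V hV h1 h2
    rw [heq] at h2 ⊢
    exact (chainStep_prop hW (chainSeq_isOpen x hW j)).2.2.2 V hV h1 h2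

lemma chainSeq_reaches (x : X) {W : Set X} (hW : IsOpen W) (hxW : minOpen X x ⊆ W) :
    chainSeq x W (rk W - rk (minOpen X x)) = W := by
  set m := rk W - rk (minOpen X x) with hm
  have hrkW : rk (minOpen X x) + m = rk W :=
    Nat.add_sub_cancel' (rk_mono hxW)
  have key : ∀ j ≤ m, chainSeq x W j ⊆ W ∧ rk (chainSeq x W j) = rk (minOpen X x) + j := by
    intro j hj
    induction j with
    | zero => exact ⟨hxW, rfl⟩
    | succ j ih =>
      obtain ⟨hsub, hrk⟩ := ih (Nat.le_of_succ_le hj)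
      have hne : chainSeq x W j ≠ W := by
        intro he
        rw [he] at hrk
        omega
      have hssub : chainSeq x W j ⊂ W := ⟨hsub, fun hrev => hne (Set.Subset.antisymm hsub hrev)⟩
      obtain ⟨ho, hlt, hsub', hcov⟩ := chainStep_spec1 ⟨chainSeq_isOpen x hW j, hW, hssub⟩
      have heq : chainSeq x W (j + 1) = chainStep W (chainSeq x W j) := by
        rw [chainSeq, Function.iterate_succ_apply']; rfl
      constructor
      · rw [heq]; exact hsub'
      · rw [heq, rk_cover (chainSeq_isOpen x hW j) hlt.1 (fun he => hlt.2 he.ge) hcov ho, hrk]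
        omega
  obtain ⟨hsub, hrk⟩ := key m le_rfl
  by_contra hne
  have := rk_strict (chainSeq_isOpen x hW m) hsub hne
  omega

lemma nested_mono' {x : X} {c : ℕ → Set X}
    (hc : NestedSeq X x c) : Monotone c :=
  monotone_nat_of_le_succ hc.2.2.1

lemma nested_rk {x : X} {c : ℕ → Set X} (hc : NestedSeq X x c) (j : ℕ)
    (hj : ∀ i < j, c i ≠ Set.univ) : rk (c j) = rk (c 0) + j := by
  induction j with
  | zero => rfl
  | succ j ih =>
    have hne : c j ≠ c (j + 1) := by
      rcases hc.2.2.2.1 j with h | h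
      · exact h
      · exact absurd h (hj j (Nat.lt_succ_self j))
    rw [rk_cover (hc.2.1 j) (hc.2.2.1 j) hne (hc.2.2.2.2 j) (hc.2.1 (j + 1)),
      ih (fun i hi => hj i (Nat.lt_succ_of_lt hi))]
    omega

end Aux

theorem stmt5 (X : Type*) [TopologicalSpace X] [Finite X] (x y : X) (k : ℕ)
    (h : furth X x y = k) (c : ℕ → Set X) (hc : NestedSeq X x c) (hy : y ∈ c k) :
    c k = minOpen X x ∪ minOpen X y := by
  classical
  set W : Set X := minOpen X x ∪ minOpen X y with hWdef
  have hW : IsOpen W := (isOpen_minOpen x).union (isOpen_minOpen y)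
  have hxW : minOpen X x ⊆ W := Set.subset_union_left
  have hle : ∀ j ∈ {k' | ∃ c' : ℕ → Set X, NestedSeq X x c' ∧ y ∈ c' k'}, k ≤ j := by
    intro j hj
    exact h ▸ Nat.sInf_le hj
  have hnu : ∀ i < k, c i ≠ Set.univ := by
    intro i hik hiu
    have : k ≤ i := hle i ⟨c, hc, hiu ▸ Set.mem_univ y⟩
    omega
  have hWck : W ⊆ c k := by
    apply Set.union_subset
    · exact hc.1 ▸ nested_mono' hc (Nat.zero_le k)
    · exact minOpen_subset (hc.2.1 k) hy
  have hrkck : rk (c k) = rk (minOpen X x) + k := by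
    have := nested_rk hc k hnu
    rwa [hc.1] at this
  set m := rk W - rk (minOpen X x) with hm
  have hreach := chainSeq_reaches x hW hxW
  have hymem : y ∈ chainSeq x W m := by
    rw [hm, hreach, hWdef]
    exact Set.mem_union_right _ (mem_minOpen y)
  have hkm : k ≤ m := hle m ⟨chainSeq x W, chainSeq_nested x hW, hymem⟩
  have hrkW : rk (minOpen X x) + m = rk W := Nat.add_sub_cancel' (rk_mono hxW)
  by_contra hne
  have := rk_strict hW hWck (fun he => hne he.symm)
  omega
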